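/- arXiv:2005.09048 — 10 statements merged into one kernel-verified Lean document; each statement's English description precedes it below -/
import Mathlib

section
/- Let K be a kernel, X a metric space with Borel probability measure μ_X, s > 0, and x ∈ X. Then ∫_{x'∈X} K(d(x,x')/s) dμ_X = ∫₀^∞ μ_X(B(x, s·K⁻¹(r))) dr, where B(x,R) denotes the open ball of radius R around x and K⁻¹(t) = min{u : K(u) ≤ t}. -/
open MeasureTheory

def IsKernel (K : ℝ → ℝ) : Prop :=
  (∀ x, 0 ≤ x → 0 ≤ K x) ∧
  (∀ x y, 0 ≤ x → x ≤ y → K y ≤ K x) ∧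
  (∀ x, 0 ≤ x → ContinuousWithinAt K (Set.Ici x) x) ∧
  MeasureTheory.IntegrableOn K (Set.Ioi 0) ∧
  0 < ∫ r in Set.Ioi (0 : ℝ), K r

/-- Layer-cake formula for the local density estimate:
`∫ K(d(x,x')/s) dμ(x') = ∫₀^∞ μ(B(x, s·K⁻¹(r))) dr`. -/
theorem stmt3 {X : Type*} [MeasurableSpace X] [MetricSpace X] [BorelSpace X]
    (μ : Measure X) [IsProbabilityMeasure μ]
    (K : ℝ → ℝ) (hK : IsKernel K) (Kinv : ℝ → ℝ)
    (hKinv : ∀ t : ℝ, 0 < t → IsLeast {u : ℝ | 0 ≤ u ∧ K u ≤ t} (Kinv t))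
    (s : ℝ) (hs : 0 < s) (x : X) :
    ∫ x', K (dist x x' / s) ∂μ =
      ∫ r in Set.Ioi (0 : ℝ), (μ (Metric.ball x (s * Kinv r))).toReal := by
  obtain ⟨hK0, hKmono, _, _, _⟩ := hK
  set f : X → ℝ := fun x' => K (max (dist x x' / s) 0) with hf
  have hmax : ∀ x' : X, max (dist x x' / s) 0 = dist x x' / s := fun x' =>
    max_eq_left (div_nonneg dist_nonneg hs.le)
  have hanti : Antitone (fun u : ℝ => K (max u 0)) := fun a b hab =>
    hKmono _ _ (le_max_right a 0) (max_le_max hab le_rfl)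
  have hdm : Measurable (fun x' : X => dist x x' / s) :=
    ((continuous_const.dist continuous_id).measurable).div_const s
  have hmeas : Measurable f := hanti.measurable.comp hdm
  have hnn : ∀ x', 0 ≤ f x' := fun x' => hK0 _ (le_max_right _ 0)
  have hInt : Integrable f μ := by
    refine Integrable.mono' (integrable_const (K 0)) hmeas.aestronglyMeasurable
      (Filter.Eventually.of_forall fun x' => ?_)
    rw [Real.norm_of_nonneg (hnn x')]
    exact hKmono 0 _ le_rfl (le_max_right _ 0)
  have hlhs : (∫ x', K (dist x x' / s) ∂μ) = ∫ x', f x' ∂μ := by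
    simp only [hf, hmax]
  rw [hlhs, hInt.integral_eq_integral_meas_lt (Filter.Eventually.of_forall hnn)]
  refine setIntegral_congr_fun measurableSet_Ioi fun r hr => ?_
  congr 2
  obtain ⟨⟨hKinn, hKile⟩, hleast⟩ := hKinv r hr
  ext a
  simp only [Set.mem_setOf_eq, Metric.mem_ball, hf, hmax]
  constructor
  · intro h
    rw [dist_comm, ← div_lt_iff₀' hs]
    by_contra hc
    push_neg at hc
    exact absurd (le_trans (hKmono _ _ hKinn hc) hKile) (not_le.mpr h)
  · intro h
    rw [dist_comm, ← div_lt_iff₀' hs] at h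
    by_contra hc
    push_neg at hc
    exact absurd (hleast ⟨div_nonneg dist_nonneg hs.le, hc⟩) (not_le.mpr h)
end

section
/- Let K be a kernel and r' ∈ (0, K(0)). Let Z be a compact metric space with Borel probability measures μ and ν such that the Prokhorov distance d_P(μ,ν) < ε, and let x, y ∈ Z with d(x,y) < ε'. Then for all s > 0, (μ ★ K_s)(x) ≤ (ν ★ K_{s+ε_s})(y) + ε_k, where ε_s = (ε+ε')/K⁻¹(r') and ε_k = K(0)·(K(0)/r' − 1) + K(0)·ε. -/
open MeasureTheory

/-- The Prokhorov distance between two Borel probability measures. -/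
noncomputable def prokhorovDist {Z : Type*} [MeasurableSpace Z] [PseudoMetricSpace Z]
    (μ ν : Measure Z) : ℝ :=
  sInf {ε : ℝ | 0 < ε ∧ ∀ A : Set Z, MeasurableSet A →
    μ A ≤ ν (Metric.thickening ε A) + ENNReal.ofReal ε ∧
    ν A ≤ μ (Metric.thickening ε A) + ENNReal.ofReal ε}

/-- If `d_P(μ,ν) < ε` and `d(x,y) < ε'`, then
`(μ ★ K_s)(x) ≤ (ν ★ K_{s+ε_s})(y) + ε_k` with
`ε_s = (ε+ε')/K⁻¹(r')` and `ε_k = K(0)(K(0)/r' − 1) + K(0)·ε`. -/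
theorem stmt4 {Z : Type*} [MeasurableSpace Z] [MetricSpace Z] [BorelSpace Z] [CompactSpace Z]
    (μ ν : Measure Z) [IsProbabilityMeasure μ] [IsProbabilityMeasure ν]
    (K : ℝ → ℝ) (hK : IsKernel K) (Kinv : ℝ → ℝ)
    (hKinv : ∀ t : ℝ, 0 < t → IsLeast {u : ℝ | 0 ≤ u ∧ K u ≤ t} (Kinv t))
    (r' : ℝ) (hr' : r' ∈ Set.Ioo 0 (K 0))
    (ε ε' : ℝ) (hP : prokhorovDist μ ν < ε)
    (x y : Z) (hxy : dist x y < ε')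
    (s : ℝ) (hs : 0 < s) :
    ∫ z, K (dist x z / s) ∂μ ≤
      (∫ z, K (dist y z / (s + (ε + ε') / Kinv r')) ∂ν) +
        (K 0 * (K 0 / r' - 1) + K 0 * ε) := by
  obtain ⟨hK0, hKm, _, _, _⟩ := hK
  set c := K 0 with hc
  have hcpos : 0 < c := lt_trans hr'.1 hr'.2
  -- get a δ in the Prokhorov set with δ < ε
  have hne : {δ : ℝ | 0 < δ ∧ ∀ A : Set Z, MeasurableSet A →
      μ A ≤ ν (Metric.thickening δ A) + ENNReal.ofReal δ ∧
      ν A ≤ μ (Metric.thickening δ A) + ENNReal.ofReal δ}.Nonempty := by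
    refine ⟨1, one_pos, fun A _ => ⟨?_, ?_⟩⟩ <;>
      · rw [ENNReal.ofReal_one]
        exact le_trans prob_le_one le_add_self
  unfold prokhorovDist at hP
  obtain ⟨δ, ⟨hδ0, hδP⟩, hδε⟩ := exists_lt_of_csInf_lt hne hP
  have hε : 0 < ε := lt_trans hδ0 hδε
  have hε' : 0 < ε' := lt_of_le_of_lt dist_nonneg hxy
  -- Kinv r'
  set a := Kinv r' with ha
  have hA := hKinv r' hr'.1
  have ha0 : 0 ≤ a := hA.1.1
  have haK : K a ≤ r' := hA.1.2
  have hapos : 0 < a := by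
    rcases ha0.lt_or_eq with h | h
    · exact h
    · exfalso; rw [← h] at haK; exact absurd hr'.2 (not_lt.2 haK)
  set s' := s + (ε + ε') / a with hs'def
  have hs' : 0 < s' := add_pos hs (div_pos (by linarith) hapos)
  -- measurability of K on nonnegatives
  have hK' : Antitone (fun u => K (max u 0)) := fun u v huv =>
    hKm _ _ (le_max_right _ _) (max_le_max huv le_rfl)
  set f : Z → ℝ := fun z => K (dist x z / s) with hf
  set g : Z → ℝ := fun z => K (dist y z / s') with hg
  have hfeq : f = fun z => K (max (dist x z / s) 0) := by
    funext z; rw [max_eq_left (div_nonneg dist_nonneg hs.le)]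
  have hgeq : g = fun z => K (max (dist y z / s') 0) := by
    funext z; rw [max_eq_left (div_nonneg dist_nonneg hs'.le)]
  have hfm : Measurable f := by
    rw [hfeq]; exact hK'.measurable.comp ((continuous_const.dist continuous_id).measurable.div_const s)
  have hgm : Measurable g := by
    rw [hgeq]; exact hK'.measurable.comp ((continuous_const.dist continuous_id).measurable.div_const s')
  have hfnn : ∀ z, 0 ≤ f z := fun z => hK0 _ (div_nonneg dist_nonneg hs.le)
  have hgnn : ∀ z, 0 ≤ g z := fun z => hK0 _ (div_nonneg dist_nonneg hs'.le)
  have hfc : ∀ z, f z ≤ c := fun z => hKm 0 _ le_rfl (div_nonneg dist_nonneg hs.le)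
  have hgc : ∀ z, g z ≤ c := fun z => hKm 0 _ le_rfl (div_nonneg dist_nonneg hs'.le)
  have hfi : Integrable f μ := by
    refine Integrable.mono' (integrable_const c) hfm.aestronglyMeasurable
      (Filter.Eventually.of_forall fun z => ?_)
    rw [Real.norm_eq_abs, abs_of_nonneg (hfnn z)]; exact hfc z
  have hgi : Integrable g ν := by
    refine Integrable.mono' (integrable_const c) hgm.aestronglyMeasurable
      (Filter.Eventually.of_forall fun z => ?_)
    rw [Real.norm_eq_abs, abs_of_nonneg (hgnn z)]; exact hgc z
  -- layer cake
  set F : ℝ → ℝ := fun t => (μ {z | t < f z}).toReal with hF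
  set G : ℝ → ℝ := fun t => (ν {z | t < g z}).toReal with hG
  have hfint : ∫ z, f z ∂μ = ∫ t in Set.Ioi (0:ℝ), F t :=
    hfi.integral_eq_integral_meas_lt (Filter.Eventually.of_forall hfnn)
  have hgint : ∫ z, g z ∂ν = ∫ t in Set.Ioi (0:ℝ), G t :=
    hgi.integral_eq_integral_meas_lt (Filter.Eventually.of_forall hgnn)
  -- key inequality :  F t ≤ G t + ε   for t ∈ Ioc 0 r'
  have hkey : ∀ t ∈ Set.Ioc (0:ℝ) r', F t ≤ G t + ε := by
    intro t ht
    have hB := hKinv t ht.1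
    set b := Kinv t with hb
    have hab : a ≤ b := hA.2 ⟨hB.1.1, le_trans hB.1.2 ht.2⟩
    have hsub : Metric.thickening δ {z | t < f z} ⊆ {z | t < g z} := by
      intro w hw
      obtain ⟨z, hz, hwz⟩ := Metric.mem_thickening_iff.mp hw
      have hz' : t < K (dist x z / s) := hz
      have h1 : dist x z / s < b := by
        by_contra h
        push_neg at h
        have := hKm b (dist x z / s) hB.1.1 h
        have := le_trans this hB.1.2
        linarith [hz']
      have h1' : dist x z < s * b := by rw [mul_comm]; exact (div_lt_iff₀ hs).mp h1
      have h2 : dist y w < s' * b := by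
        have htri : dist y w ≤ dist y x + dist x z + dist z w := dist_triangle4 y x z w
        have h3 : (ε + ε') / a * a ≤ (ε + ε') / a * b :=
          mul_le_mul_of_nonneg_left hab (div_nonneg (by linarith) hapos.le)
        rw [div_mul_cancel₀ _ hapos.ne'] at h3
        have : dist z w < δ := by rw [dist_comm]; exact hwz
        have : dist y x < ε' := by rw [dist_comm]; exact hxy
        calc dist y w ≤ dist y x + dist x z + dist z w := htri
          _ < ε' + s * b + δ := by
              have hzw : dist z w < δ := by rw [dist_comm]; exact hwz
              have hyx : dist y x < ε' := by rw [dist_comm]; exact hxy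
              linarith
          _ ≤ ε + ε' + s * b := by linarith
          _ ≤ (ε + ε') / a * b + s * b := by linarith
          _ = s' * b := by rw [hs'def]; ring
      have h2' : dist y w / s' < b := (div_lt_iff₀ hs').mpr (by rw [mul_comm]; exact h2)
      show t < g w
      by_contra h
      push_neg at h
      have : b ≤ dist y w / s' := hB.2 ⟨div_nonneg dist_nonneg hs'.le, h⟩
      linarith
    have hmeas : MeasurableSet {z | t < f z} := measurableSet_lt measurable_const hfm
    have h4 : μ {z | t < f z} ≤ ν {z | t < g z} + ENNReal.ofReal δ :=
      le_trans (hδP _ hmeas).1 (add_le_add_left (measure_mono hsub) _)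
    have h5 : (μ {z | t < f z}).toReal ≤ (ν {z | t < g z} + ENNReal.ofReal δ).toReal :=
      ENNReal.toReal_mono (by finiteness) h4
    rw [ENNReal.toReal_add (by finiteness) (by finiteness), ENNReal.toReal_ofReal hδ0.le] at h5
    exact le_trans h5 (by simp only [hG]; linarith)
  -- basic properties of F and G
  have hFanti : Antitone F := fun t1 t2 h =>
    ENNReal.toReal_mono (measure_ne_top _ _) (measure_mono fun z hz => lt_of_le_of_lt h hz)
  have hGanti : Antitone G := fun t1 t2 h =>
    ENNReal.toReal_mono (measure_ne_top _ _) (measure_mono fun z hz => lt_of_le_of_lt h hz)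
  have hFnn : ∀ t, 0 ≤ F t := fun t => ENNReal.toReal_nonneg
  have hGnn : ∀ t, 0 ≤ G t := fun t => ENNReal.toReal_nonneg
  have hF1 : ∀ t, F t ≤ 1 := fun t => by
    have := ENNReal.toReal_mono (measure_ne_top μ Set.univ) (measure_mono (Set.subset_univ {z | t < f z}))
    simpa using this
  have hF0 : ∀ t, c ≤ t → F t = 0 := by
    intro t htc
    have : {z | t < f z} = ∅ := by
      ext z; simp only [Set.mem_setOf_eq, Set.mem_empty_iff_false, iff_false, not_lt]
      exact le_trans (hfc z) htc
    simp [hF, this]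
  have hG0 : ∀ t, c ≤ t → G t = 0 := by
    intro t htc
    have : {z | t < g z} = ∅ := by
      ext z; simp only [Set.mem_setOf_eq, Set.mem_empty_iff_false, iff_false, not_lt]
      exact le_trans (hgc z) htc
    simp [hG, this]
  -- integrability of F, G on Ioi 0
  have hint : ∀ (H : ℝ → ℝ), Antitone H → (∀ t, 0 ≤ H t) → (∀ t, H t ≤ 1) →
      (∀ t, c ≤ t → H t = 0) → ∀ p : ℝ, IntegrableOn H (Set.Ioi p) := by
    intro H hanti hnn h1 h0 p
    have hIoc : IntegrableOn H (Set.Ioc p c) := by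
      have hcst : IntegrableOn (fun _ : ℝ => (1:ℝ)) (Set.Ioc p c) :=
        integrableOn_const measure_Ioc_lt_top.ne
      refine Integrable.mono' hcst
        hanti.measurable.aestronglyMeasurable (Filter.Eventually.of_forall fun t => ?_)
      rw [Real.norm_eq_abs, abs_of_nonneg (hnn t)]; exact h1 t
    have hIoi : IntegrableOn H (Set.Ioi c) := by
      refine (integrableOn_zero).congr_fun (fun t ht => ?_) measurableSet_Ioi
      exact (h0 t (le_of_lt ht)).symm
    rcases le_or_gt p c with h | h
    · have := hIoc.union hIoi
      rwa [Set.Ioc_union_Ioi_eq_Ioi h] at this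
    · refine (integrableOn_zero).congr_fun (fun t ht => ?_) measurableSet_Ioi
      exact (h0 t (le_of_lt (lt_trans h ht))).symm
  have hFint : IntegrableOn F (Set.Ioi 0) := hint F hFanti hFnn hF1 hF0 0
  have hGint : IntegrableOn G (Set.Ioi 0) := hint G hGanti hGnn
    (fun t => by
      have := ENNReal.toReal_mono (measure_ne_top ν Set.univ) (measure_mono (Set.subset_univ {z | t < g z}))
      simpa using this) hG0 0
  -- split the μ-side integral
  have hsplit : ∫ t in Set.Ioi (0:ℝ), F t =
      (∫ t in Set.Ioc (0:ℝ) r', F t) + ∫ t in Set.Ioi r', F t := by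
    rw [← setIntegral_union (Set.Ioc_disjoint_Ioi le_rfl) measurableSet_Ioi
      (hFint.mono_set Set.Ioc_subset_Ioi_self) (hint F hFanti hFnn hF1 hF0 r'),
      Set.Ioc_union_Ioi_eq_Ioi hr'.1.le]
  -- bound the tail
  have htail : ∫ t in Set.Ioi r', F t ≤ c - r' := by
    have h1 : ∫ t in Set.Ioi r', F t =
        (∫ t in Set.Ioc r' c, F t) + ∫ t in Set.Ioi c, F t := by
      rw [← setIntegral_union (Set.Ioc_disjoint_Ioi le_rfl) measurableSet_Ioi
        ((hint F hFanti hFnn hF1 hF0 r').mono_set Set.Ioc_subset_Ioi_self)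
        (hint F hFanti hFnn hF1 hF0 c), Set.Ioc_union_Ioi_eq_Ioi hr'.2.le]
    have h2 : ∫ t in Set.Ioi c, F t = 0 := by
      rw [setIntegral_congr_fun measurableSet_Ioi (fun t ht => hF0 t (le_of_lt ht))]
      simp
    have h3 : ∫ t in Set.Ioc r' c, F t ≤ ∫ t in Set.Ioc r' c, (1:ℝ) := by
      refine setIntegral_mono_on ((hint F hFanti hFnn hF1 hF0 r').mono_set Set.Ioc_subset_Ioi_self)
        (integrableOn_const measure_Ioc_lt_top.ne) measurableSet_Ioc
        (fun t _ => hF1 t)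
    have h4 : ∫ t in Set.Ioc r' c, (1:ℝ) = c - r' := by
      simp [Real.volume_Ioc, ENNReal.toReal_ofReal (sub_nonneg.2 hr'.2.le), hr'.2.le]
    rw [h1, h2]; linarith
  -- bound the head
  have hhead : ∫ t in Set.Ioc (0:ℝ) r', F t ≤ (∫ t in Set.Ioc (0:ℝ) r', G t) + ε * r' := by
    have h1 : ∫ t in Set.Ioc (0:ℝ) r', F t ≤ ∫ t in Set.Ioc (0:ℝ) r', (G t + ε) := by
      refine setIntegral_mono_on (hFint.mono_set Set.Ioc_subset_Ioi_self)
        ((hGint.mono_set Set.Ioc_subset_Ioi_self).add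
          (integrableOn_const measure_Ioc_lt_top.ne)) measurableSet_Ioc hkey
    have h2 : ∫ t in Set.Ioc (0:ℝ) r', (G t + ε) =
        (∫ t in Set.Ioc (0:ℝ) r', G t) + ε * r' := by
      rw [integral_add (hGint.mono_set Set.Ioc_subset_Ioi_self)
        (integrableOn_const measure_Ioc_lt_top.ne), setIntegral_const,
        Real.volume_real_Ioc_of_le hr'.1.le, sub_zero, smul_eq_mul]
      ring
    linarith
  have hmono : ∫ t in Set.Ioc (0:ℝ) r', G t ≤ ∫ t in Set.Ioi (0:ℝ), G t := by
    refine setIntegral_mono_set hGint (Filter.Eventually.of_forall fun t => hGnn t)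
      (HasSubset.Subset.eventuallyLE Set.Ioc_subset_Ioi_self)
  -- put everything together
  have hfinal : ∫ z, f z ∂μ ≤ (∫ z, g z ∂ν) + (ε * r' + (c - r')) := by
    rw [hfint, hgint, hsplit]; linarith
  have harith : ε * r' + (c - r') ≤ c * (c / r' - 1) + c * ε := by
    have hq : c / r' * r' = c := div_mul_cancel₀ c hr'.1.ne'
    have hu1 : 1 ≤ c / r' := (one_le_div hr'.1).mpr hr'.2.le
    nlinarith [mul_nonneg (sub_nonneg.2 hu1) (sub_nonneg.2 hr'.2.le),
      mul_nonneg hε.le (sub_nonneg.2 hr'.2.le)]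
  calc ∫ z, f z ∂μ ≤ (∫ z, g z ∂ν) + (ε * r' + (c - r')) := hfinal
    _ ≤ (∫ z, g z ∂ν) + (c * (c / r' - 1) + c * ε) := by linarith
end

section
/- Let f, g : ℝ^d → ℝ≥0 be probability density functions with the same support, and let ε ≥ 0. Then ‖f − g‖_∞ ≤ ε if and only if the density-contour hierarchical clusterings H(f) and H(g) are ε-interleaved. -/
open MeasureTheory

/-- `‖f − g‖_∞ ≤ ε` iff the density-contour hierarchical clusterings `H(f)` and `H(g)`
are `ε`-interleaved: for all `r > ε`, each connected component of `{f ≥ r}` is contained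
in a connected component of `{g ≥ r − ε}`, and symmetrically. -/
theorem stmt5 (d : ℕ) (f g : EuclideanSpace ℝ (Fin d) → ℝ)
    (hf0 : ∀ x, 0 ≤ f x) (hg0 : ∀ x, 0 ≤ g x)
    (hfi : Integrable f) (hgi : Integrable g)
    (hf1 : ∫ x, f x = 1) (hg1 : ∫ x, g x = 1)
    (hsupp : Function.support f = Function.support g)
    (ε : ℝ) (hε : 0 ≤ ε) :
    (∀ x, |f x - g x| ≤ ε) ↔
      (∀ r : ℝ, ε < r →
        (∀ x, r ≤ f x →
          connectedComponentIn {y | r ≤ f y} x ⊆ connectedComponentIn {y | r - ε ≤ g y} x) ∧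
        (∀ x, r ≤ g x →
          connectedComponentIn {y | r ≤ g y} x ⊆ connectedComponentIn {y | r - ε ≤ f y} x)) := by
  constructor
  · intro h r hr
    constructor
    · intro x hx
      apply connectedComponentIn_mono
      intro y hy
      have := abs_le.mp (h y)
      simp only [Set.mem_setOf_eq] at hy ⊢
      linarith [this.1]
    · intro x hx
      apply connectedComponentIn_mono
      intro y hy
      have := abs_le.mp (h y)
      simp only [Set.mem_setOf_eq] at hy ⊢
      linarith [this.2]
  · intro h x
    rw [abs_le]
    constructor
    · by_contra hc
      push_neg at hc
      have hr : ε < g x := by linarith [hf0 x]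
      have h2 := (h (g x) hr).2 x le_rfl
      have hx : x ∈ connectedComponentIn {y | g x ≤ g y} x :=
        mem_connectedComponentIn (by simp)
      have := connectedComponentIn_subset {y | g x - ε ≤ f y} x (h2 hx)
      simp only [Set.mem_setOf_eq] at this
      linarith
    · by_contra hc
      push_neg at hc
      have hr : ε < f x := by linarith [hg0 x]
      have h1 := (h (f x) hr).1 x le_rfl
      have hx : x ∈ connectedComponentIn {y | f x ≤ f y} x :=
        mem_connectedComponentIn (by simp)
      have := connectedComponentIn_subset {y | f x - ε ≤ g y} x (h1 hx)
      simp only [Set.mem_setOf_eq] at this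
      linarith
end

section
/- The correspondence-interleaving distance d_CI on hierarchical clusterings satisfies: (1) d_CI(H,H) = 0; (2) d_CI(H,E) = d_CI(E,H); (3) d_CI(H,F) ≤ d_CI(H,E) + d_CI(E,F). -/
/-- A clustering: a family of non-empty pairwise disjoint subsets. -/
def IsClustering {X : Type*} (S : Set (Set X)) : Prop :=
  (∀ A ∈ S, A.Nonempty) ∧ ∀ A ∈ S, ∀ B ∈ S, A ≠ B → Disjoint A B

/-- A (contravariant) hierarchical clustering: an order-reversing map from `ℝ>0`
to the poset of clusterings (ordered by refinement). -/
def IsHC {X : Type*} (H : ℝ → Set (Set X)) : Prop :=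
  (∀ r : ℝ, 0 < r → IsClustering (H r)) ∧
  ∀ r r' : ℝ, 0 < r' → r' ≤ r → ∀ A ∈ H r, ∃ B ∈ H r', A ⊆ B

/-- A correspondence between `X` and `Y`. -/
def IsCorr {X Y : Type*} (R : Set (X × Y)) : Prop :=
  (∀ x, ∃ y, (x, y) ∈ R) ∧ (∀ y, ∃ x, (x, y) ∈ R)

/-- `H` and `E` are `ε`-interleaved with respect to the correspondence `R`. -/
def InterR {X Y : Type*} (H : ℝ → Set (Set X)) (E : ℝ → Set (Set Y))
    (R : Set (X × Y)) (ε : ℝ) : Prop :=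
  ∀ r : ℝ, ε < r →
    (∀ A ∈ H r, ∃ B ∈ E (r - ε), ∀ p ∈ R, p.1 ∈ A → p.2 ∈ B) ∧
    (∀ B ∈ E r, ∃ A ∈ H (r - ε), ∀ p ∈ R, p.2 ∈ B → p.1 ∈ A)

/-- The correspondence-interleaving distance. -/
noncomputable def dCI {X Y : Type*} (H : ℝ → Set (Set X)) (E : ℝ → Set (Set Y)) : ENNReal :=
  sInf (ENNReal.ofReal ''
    {ε : ℝ | 0 ≤ ε ∧ ∃ R : Set (X × Y), IsCorr R ∧ InterR H E R ε})

lemma interR_swap {X Y : Type*} {H : ℝ → Set (Set X)} {E : ℝ → Set (Set Y)}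
    {R : Set (X × Y)} {ε : ℝ} (h : InterR H E R ε) :
    InterR E H {p : Y × X | (p.2, p.1) ∈ R} ε := by
  intro r hr
  obtain ⟨h1, h2⟩ := h r hr
  constructor
  · intro B hB
    obtain ⟨A, hA, hAB⟩ := h2 B hB
    exact ⟨A, hA, fun p hp hpB => hAB (p.2, p.1) hp hpB⟩
  · intro A hA
    obtain ⟨B, hB, hAB⟩ := h1 A hA
    exact ⟨B, hB, fun p hp hpA => hAB (p.2, p.1) hp hpA⟩

lemma interR_comp {X Y W : Type*} {H : ℝ → Set (Set X)} {E : ℝ → Set (Set Y)}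
    {F : ℝ → Set (Set W)} {R : Set (X × Y)} {S : Set (Y × W)} {ε δ : ℝ}
    (hε : 0 ≤ ε) (hδ : 0 ≤ δ)
    (h1 : InterR H E R ε) (h2 : InterR E F S δ) :
    InterR H F {p : X × W | ∃ y, (p.1, y) ∈ R ∧ (y, p.2) ∈ S} (ε + δ) := by
  intro r hr
  constructor
  · intro A hA
    obtain ⟨B, hB, hAB⟩ := (h1 r (by linarith)).1 A hA
    obtain ⟨C, hC, hBC⟩ := (h2 (r - ε) (by linarith)).1 B hB
    refine ⟨C, by rwa [← sub_sub], ?_⟩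
    rintro p ⟨y, hy1, hy2⟩ hpA
    exact hBC (y, p.2) hy2 (hAB (p.1, y) hy1 hpA)
  · intro C hC
    obtain ⟨B, hB, hCB⟩ := (h2 r (by linarith)).2 C hC
    obtain ⟨A, hA, hBA⟩ := (h1 (r - δ) (by linarith)).2 B hB
    refine ⟨A, by rwa [sub_sub, add_comm δ ε] at hA, ?_⟩
    rintro p ⟨y, hy1, hy2⟩ hpC
    exact hBA (p.1, y) hy1 (hCB (y, p.2) hy2 hpC)

/-- `d_CI` is an extended pseudometric on hierarchical clusterings:
reflexivity, symmetry and the triangle inequality. -/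
theorem stmt6 {X Y W : Type*}
    (H : ℝ → Set (Set X)) (E : ℝ → Set (Set Y)) (F : ℝ → Set (Set W))
    (hH : IsHC H) (hE : IsHC E) (hF : IsHC F) :
    dCI H H = 0 ∧ dCI H E = dCI E H ∧ dCI H F ≤ dCI H E + dCI E F := by
  refine ⟨?_, ?_, ?_⟩
  · -- reflexivity
    apply le_antisymm _ zero_le
    have : (0 : ENNReal) ∈ ENNReal.ofReal ''
        {ε : ℝ | 0 ≤ ε ∧ ∃ R : Set (X × X), IsCorr R ∧ InterR H H R ε} := by
      refine ⟨0, ⟨le_refl 0, {p : X × X | p.1 = p.2}, ⟨fun x => ⟨x, rfl⟩, fun y => ⟨y, rfl⟩⟩, ?_⟩,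
        ENNReal.ofReal_zero⟩
      intro r hr
      constructor
      · intro A hA
        exact ⟨A, by rwa [sub_zero], fun p hp hpA => hp ▸ hpA⟩
      · intro A hA
        exact ⟨A, by rwa [sub_zero], fun p hp hpA => hp ▸ hpA⟩
    exact sInf_le this
  · -- symmetry
    unfold dCI
    congr 1
    apply congrArg
    ext ε
    constructor
    · rintro ⟨hε, R, ⟨hR1, hR2⟩, hI⟩
      exact ⟨hε, {p : Y × X | (p.2, p.1) ∈ R},
        ⟨fun y => (hR2 y).imp fun x h => h, fun x => (hR1 x).imp fun y h => h⟩,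
        interR_swap hI⟩
    · rintro ⟨hε, R, ⟨hR1, hR2⟩, hI⟩
      exact ⟨hε, {p : X × Y | (p.2, p.1) ∈ R},
        ⟨fun x => (hR2 x).imp fun y h => h, fun y => (hR1 y).imp fun x h => h⟩,
        interR_swap hI⟩
  · -- triangle inequality
    have key : ∀ a ∈ ENNReal.ofReal ''
        {ε : ℝ | 0 ≤ ε ∧ ∃ R : Set (X × Y), IsCorr R ∧ InterR H E R ε},
        ∀ b ∈ ENNReal.ofReal ''
        {ε : ℝ | 0 ≤ ε ∧ ∃ R : Set (Y × W), IsCorr R ∧ InterR E F R ε},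
        dCI H F ≤ a + b := by
      rintro _ ⟨ε, ⟨hε, R, hR, hIR⟩, rfl⟩ _ ⟨δ, ⟨hδ, S, hS, hIS⟩, rfl⟩
      rw [← ENNReal.ofReal_add hε hδ]
      apply sInf_le
      refine ⟨ε + δ, ⟨by linarith, {p : X × W | ∃ y, (p.1, y) ∈ R ∧ (y, p.2) ∈ S}, ⟨?_, ?_⟩,
        interR_comp hε hδ hIR hIS⟩, rfl⟩
      · intro x
        obtain ⟨y, hy⟩ := hR.1 x
        obtain ⟨w, hw⟩ := hS.1 y
        exact ⟨w, y, hy, hw⟩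
      · intro w
        obtain ⟨y, hy⟩ := hS.2 w
        obtain ⟨x, hx⟩ := hR.2 y
        exact ⟨x, y, hx, hy⟩
    rw [dCI, dCI, ENNReal.sInf_add]
    simp only [le_iInf_iff]
    intro a ha
    rw [add_comm, dCI, ENNReal.sInf_add]
    simp only [le_iInf_iff]
    intro b hb
    rw [add_comm]
    exact key a ha b hb
end

section
/- Let γ : I_γ → (ℝ>0)³ be a curve in the (1,1,−1)-parameter space that is continuously differentiable with γ_s' < 0, γ_t' < 0, γ_k' > 0, and suppose c := inf_{r ∈ I_γ} min(|γ_s'(r)|, |γ_t'(r)|, γ_k'(r)) > 0. Let H and E be (1,1,−1)-hierarchical clusterings of X and Y, R ⊆ X × Y a correspondence, and ε > 0. If H and E are (ε,ε,ε)-interleaved with respect to R, then the slices H^γ and E^γ are (ε/c)-interleaved with respect to R. -/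
open Set

/-- A `(1,1,−1)`-hierarchical clustering: order-preserving in the first two
(covariant) parameters and order-reversing in the third. -/
def IsHC3 {X : Type*} (H : ℝ → ℝ → ℝ → Set (Set X)) : Prop :=
  (∀ s t k : ℝ, 0 < s → 0 < t → 0 < k → IsClustering (H s t k)) ∧
  ∀ s s' t t' k k' : ℝ, 0 < s → s ≤ s' → 0 < t → t ≤ t' → 0 < k' → k' ≤ k →
    ∀ A ∈ H s t k, ∃ B ∈ H s' t' k', A ⊆ B

/-- `(ε,ε,ε)`-interleaving of `(1,1,−1)`-hierarchical clusterings w.r.t. `R`. -/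
def InterR3 {X Y : Type*} (H : ℝ → ℝ → ℝ → Set (Set X)) (E : ℝ → ℝ → ℝ → Set (Set Y))
    (R : Set (X × Y)) (ε : ℝ) : Prop :=
  ∀ s t k : ℝ, 0 < s → 0 < t → ε < k →
    (∀ A ∈ H s t k, ∃ B ∈ E (s + ε) (t + ε) (k - ε), ∀ p ∈ R, p.1 ∈ A → p.2 ∈ B) ∧
    (∀ B ∈ E s t k, ∃ A ∈ H (s + ε) (t + ε) (k - ε), ∀ p ∈ R, p.2 ∈ B → p.1 ∈ A)

/-- The slice of a three-parameter hierarchical clustering along the curve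
`γ = (gs, gt, gk) : (0, M) → (ℝ>0)³`; it is empty outside `(0, M)`. -/
def sliceHC {X : Type*} (H : ℝ → ℝ → ℝ → Set (Set X))
    (gs gt gk : ℝ → ℝ) (M : ℝ) : ℝ → Set (Set X) :=
  fun r => {A | 0 < r ∧ r < M ∧ A ∈ H (gs r) (gt r) (gk r)}

lemma mvt_upper {f f' : ℝ → ℝ} {a b K : ℝ} (hab : a < b)
    (hf : ∀ x ∈ Icc a b, HasDerivAt f (f' x) x)
    (hK : ∀ x ∈ Ioo a b, f' x ≤ K) : f b - f a ≤ K * (b - a) := by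
  obtain ⟨x, hx, hs⟩ := exists_hasDerivAt_eq_slope f f' hab
    (fun x hx => (hf x hx).continuousAt.continuousWithinAt)
    (fun x hx => hf x (Ioo_subset_Icc_self hx))
  have h1 : (f b - f a) / (b - a) ≤ K := hs ▸ hK x hx
  have hba : 0 < b - a := sub_pos.mpr hab
  calc f b - f a = (f b - f a) / (b - a) * (b - a) := by field_simp
    _ ≤ K * (b - a) := by nlinarith

lemma mvt_lower {f f' : ℝ → ℝ} {a b K : ℝ} (hab : a < b)
    (hf : ∀ x ∈ Icc a b, HasDerivAt f (f' x) x)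
    (hK : ∀ x ∈ Ioo a b, K ≤ f' x) : K * (b - a) ≤ f b - f a := by
  have := mvt_upper (f := fun y => -f y) (f' := fun y => -f' y) hab
    (fun x hx => (hf x hx).neg) (fun x hx => neg_le_neg (hK x hx))
  simp at this; linarith

/-- Slicing a `(ε,ε,ε)`-interleaving along a curve that is non-singular in each
component, with `c = inf min(|γ_s'|,|γ_t'|,γ_k') > 0`, yields an `ε/c`-interleaving
of the slices with respect to the same correspondence. -/
theorem stmt7 {X Y : Type*}
    (M : ℝ) (hM : 0 < M)
    (gs gt gk gs' gt' gk' : ℝ → ℝ)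
    (hderiv : ∀ r ∈ Ioo (0 : ℝ) M,
      HasDerivAt gs (gs' r) r ∧ HasDerivAt gt (gt' r) r ∧ HasDerivAt gk (gk' r) r)
    (hcont' : ContinuousOn gs' (Ioo 0 M) ∧ ContinuousOn gt' (Ioo 0 M) ∧
      ContinuousOn gk' (Ioo 0 M))
    (hsign : ∀ r ∈ Ioo (0 : ℝ) M, gs' r < 0 ∧ gt' r < 0 ∧ 0 < gk' r)
    (hpos : ∀ r ∈ Ioo (0 : ℝ) M, 0 < gs r ∧ 0 < gt r ∧ 0 < gk r)
    (c : ℝ)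
    (hc : c = sInf ((fun r => min (min |gs' r| |gt' r|) (gk' r)) '' Ioo 0 M))
    (hc0 : 0 < c)
    (H : ℝ → ℝ → ℝ → Set (Set X)) (E : ℝ → ℝ → ℝ → Set (Set Y))
    (hH : IsHC3 H) (hE : IsHC3 E)
    (R : Set (X × Y)) (hR : IsCorr R)
    (ε : ℝ) (hε : 0 < ε)
    (hint : InterR3 H E R ε) :
    ∀ r : ℝ, ε / c < r →
      (∀ A ∈ sliceHC H gs gt gk M r, ∃ B ∈ sliceHC E gs gt gk M (r - ε / c),
        ∀ p ∈ R, p.1 ∈ A → p.2 ∈ B) ∧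
      (∀ B ∈ sliceHC E gs gt gk M r, ∃ A ∈ sliceHC H gs gt gk M (r - ε / c),
        ∀ p ∈ R, p.2 ∈ B → p.1 ∈ A) := by
  -- c is a lower bound of the min of derivatives on Ioo 0 M
  have hbdd : BddBelow ((fun r => min (min |gs' r| |gt' r|) (gk' r)) '' Ioo 0 M) := by
    refine ⟨0, fun v hv => ?_⟩
    obtain ⟨x, hx, rfl⟩ := hv
    exact le_min (le_min (abs_nonneg _) (abs_nonneg _)) (hsign x hx).2.2.le
  have hlb : ∀ x ∈ Ioo (0 : ℝ) M, c ≤ min (min |gs' x| |gt' x|) (gk' x) := by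
    intro x hx
    rw [hc]
    exact csInf_le hbdd ⟨x, hx, rfl⟩
  have hgs' : ∀ x ∈ Ioo (0 : ℝ) M, gs' x ≤ -c := by
    intro x hx
    have h1 := (hlb x hx).trans (min_le_left _ _) |>.trans (min_le_left _ _)
    rw [abs_of_neg (hsign x hx).1] at h1; linarith
  have hgt' : ∀ x ∈ Ioo (0 : ℝ) M, gt' x ≤ -c := by
    intro x hx
    have h1 := (hlb x hx).trans (min_le_left _ _) |>.trans (min_le_right _ _)
    rw [abs_of_neg (hsign x hx).2.1] at h1; linarith
  have hgk' : ∀ x ∈ Ioo (0 : ℝ) M, c ≤ gk' x := fun x hx =>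
    (hlb x hx).trans (min_le_right _ _)
  have hd : 0 < ε / c := div_pos hε hc0
  have hcd : c * (ε / c) = ε := mul_div_cancel₀ ε hc0.ne'
  intro r hr
  -- generic estimates for r' = r - ε/c when 0 < r' and r < M
  have key : ∀ r : ℝ, ε / c < r → r < M →
      gs r + ε ≤ gs (r - ε / c) ∧ gt r + ε ≤ gt (r - ε / c) ∧
      gk (r - ε / c) ≤ gk r - ε := by
    intro r hr hrM
    set r' := r - ε / c with hr'
    have hr'0 : 0 < r' := by simp [hr']; linarith
    have hr'r : r' < r := by simp [hr']; linarith
    have hsub : Icc r' r ⊆ Ioo 0 M := fun x hx =>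
      ⟨lt_of_lt_of_le hr'0 hx.1, lt_of_le_of_lt hx.2 hrM⟩
    have hsub' : Ioo r' r ⊆ Ioo 0 M := fun x hx => hsub (Ioo_subset_Icc_self hx)
    have hgseq : gs r - gs r' ≤ -c * (r - r') :=
      mvt_upper hr'r (fun x hx => (hderiv x (hsub hx)).1)
        (fun x hx => hgs' x (hsub' hx))
    have hgteq : gt r - gt r' ≤ -c * (r - r') :=
      mvt_upper hr'r (fun x hx => (hderiv x (hsub hx)).2.1)
        (fun x hx => hgt' x (hsub' hx))
    have hgkeq : c * (r - r') ≤ gk r - gk r' :=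
      mvt_lower hr'r (fun x hx => (hderiv x (hsub hx)).2.2)
        (fun x hx => hgk' x (hsub' hx))
    have hrr' : r - r' = ε / c := by simp [hr']
    rw [hrr'] at hgseq hgteq hgkeq
    have hneg : -c * (ε / c) = -ε := by rw [neg_mul, hcd]
    rw [hneg] at hgseq hgteq
    rw [hcd] at hgkeq
    refine ⟨by linarith, by linarith, by linarith⟩
  constructor
  · rintro A ⟨hr0, hrM, hA⟩
    obtain ⟨hgsle, hgtle, hgkle⟩ := key r hr hrM
    set r' := r - ε / c with hr'
    have hr'0 : 0 < r' := by simp [hr']; linarith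
    have hr'M : r' < M := by simp [hr']; nlinarith
    have hr'mem : r' ∈ Ioo (0 : ℝ) M := ⟨hr'0, hr'M⟩
    have hrmem : r ∈ Ioo (0 : ℝ) M := ⟨hr0, hrM⟩
    obtain ⟨hgs0, hgt0, hgk0⟩ := hpos r hrmem
    obtain ⟨hgs0', hgt0', hgk0'⟩ := hpos r' hr'mem
    have hεk : ε < gk r := by linarith
    obtain ⟨B, hB, hBmap⟩ := (hint (gs r) (gt r) (gk r) hgs0 hgt0 hεk).1 A hA
    obtain ⟨B', hB', hBB'⟩ := hE.2 (gs r + ε) (gs r') (gt r + ε) (gt r')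
      (gk r - ε) (gk r') (by linarith) hgsle (by linarith) hgtle hgk0'
      (by linarith) B hB
    exact ⟨B', ⟨hr'0, hr'M, hB'⟩, fun p hp hpA => hBB' (hBmap p hp hpA)⟩
  · rintro B ⟨hr0, hrM, hB⟩
    obtain ⟨hgsle, hgtle, hgkle⟩ := key r hr hrM
    set r' := r - ε / c with hr'
    have hr'0 : 0 < r' := by simp [hr']; linarith
    have hr'M : r' < M := by simp [hr']; nlinarith
    have hr'mem : r' ∈ Ioo (0 : ℝ) M := ⟨hr'0, hr'M⟩
    have hrmem : r ∈ Ioo (0 : ℝ) M := ⟨hr0, hrM⟩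
    obtain ⟨hgs0, hgt0, hgk0⟩ := hpos r hrmem
    obtain ⟨hgs0', hgt0', hgk0'⟩ := hpos r' hr'mem
    have hεk : ε < gk r := by linarith
    obtain ⟨A, hA, hAmap⟩ := (hint (gs r) (gt r) (gk r) hgs0 hgt0 hεk).2 B hB
    obtain ⟨A', hA', hAA'⟩ := hH.2 (gs r + ε) (gs r') (gt r + ε) (gt r')
      (gk r - ε) (gk r') (by linarith) hgsle (by linarith) hgtle hgk0'
      (by linarith) A hA
    exact ⟨A', ⟨hr'0, hr'M, hA'⟩, fun p hp hpB => hAA' (hAmap p hp hpB)⟩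
end

section
/- Let X be a metric probability space, let H be a (1,1,−1)-hierarchical clustering of X, and let γ₁, γ₂ be curves in the (1,1,−1)-parameter space that are ε-interleaved. Then the slices H^{γ₁} and H^{γ₂} are ε-interleaved (as hierarchical clusterings of the same set X, with respect to the identity correspondence), hence d_MI(H^{γ₁}, H^{γ₂}) ≤ ε. -/
open Set MeasureTheory

/-- `(δ;δ')`-measured-interleaving of measurable hierarchical clusterings of measure
spaces with respect to a correspondence `R`. -/
def MInter {X Y : Type*} [MeasurableSpace X] [MeasurableSpace Y]
    (μX : Measure X) (μY : Measure Y)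
    (H : ℝ → Set (Set X)) (E : ℝ → Set (Set Y)) (R : Set (X × Y)) (δ δ' : ℝ) : Prop :=
  ∀ r : ℝ, δ < r →
    (∃ f : Set X → Set Y,
      (∀ A ∈ H r, f A ∈ E (r - δ) ∧ ∀ p ∈ R, p.1 ∈ A → p.2 ∈ f A) ∧
      ∀ 𝒜 : Finset (Set X), ↑𝒜 ⊆ H r →
        μX (⋃ A ∈ 𝒜, (A : Set X)) ≤ μY (⋃ A ∈ 𝒜, f A) + ENNReal.ofReal δ') ∧
    (∃ g : Set Y → Set X,
      (∀ B ∈ E r, g B ∈ H (r - δ) ∧ ∀ p ∈ R, p.2 ∈ B → p.1 ∈ g B) ∧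
      ∀ ℬ : Finset (Set Y), ↑ℬ ⊆ E r →
        μY (⋃ B ∈ ℬ, (B : Set Y)) ≤ μX (⋃ B ∈ ℬ, g B) + ENNReal.ofReal δ')

/-- The measured-interleaving distance. -/
noncomputable def dMI {X Y : Type*} [MeasurableSpace X] [MeasurableSpace Y]
    (μX : Measure X) (μY : Measure Y)
    (H : ℝ → Set (Set X)) (E : ℝ → Set (Set Y)) : ENNReal :=
  sInf (ENNReal.ofReal ''
    {δ : ℝ | 0 ≤ δ ∧ ∃ R : Set (X × Y), IsCorr R ∧ MInter μX μY H E R δ δ})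

/-- If the curves `γ₁` and `γ₂` are `ε`-interleaved, then the slices `H^{γ₁}` and
`H^{γ₂}` are `ε`-interleaved, hence `d_MI(H^{γ₁}, H^{γ₂}) ≤ ε`. -/
theorem stmt8 {X : Type*} [MeasurableSpace X] (μ : Measure X)
    (H : ℝ → ℝ → ℝ → Set (Set X)) (hH : IsHC3 H)
    (hmeas : ∀ s t k : ℝ, 0 < s → 0 < t → 0 < k → ∀ A ∈ H s t k, MeasurableSet A)
    (M1 M2 : ℝ) (hM1 : 0 < M1) (hM2 : 0 < M2)
    (gs1 gt1 gk1 gs2 gt2 gk2 : ℝ → ℝ)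
    (hcont1 : ContinuousOn gs1 (Ioo 0 M1) ∧ ContinuousOn gt1 (Ioo 0 M1) ∧
      ContinuousOn gk1 (Ioo 0 M1))
    (hcont2 : ContinuousOn gs2 (Ioo 0 M2) ∧ ContinuousOn gt2 (Ioo 0 M2) ∧
      ContinuousOn gk2 (Ioo 0 M2))
    (hpos1 : ∀ r ∈ Ioo (0 : ℝ) M1, 0 < gs1 r ∧ 0 < gt1 r ∧ 0 < gk1 r)
    (hpos2 : ∀ r ∈ Ioo (0 : ℝ) M2, 0 < gs2 r ∧ 0 < gt2 r ∧ 0 < gk2 r)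
    (hmono1 : AntitoneOn gs1 (Ioo 0 M1) ∧ AntitoneOn gt1 (Ioo 0 M1) ∧
      MonotoneOn gk1 (Ioo 0 M1))
    (hmono2 : AntitoneOn gs2 (Ioo 0 M2) ∧ AntitoneOn gt2 (Ioo 0 M2) ∧
      MonotoneOn gk2 (Ioo 0 M2))
    (ε : ℝ) (hε : 0 ≤ ε)
    (hmax : |M1 - M2| ≤ ε)
    (hcurve1 : ∀ r : ℝ, ε < r → r < M1 →
      gs1 r ≤ gs2 (r - ε) ∧ gt1 r ≤ gt2 (r - ε) ∧ gk2 (r - ε) ≤ gk1 r)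
    (hcurve2 : ∀ r : ℝ, ε < r → r < M2 →
      gs2 r ≤ gs1 (r - ε) ∧ gt2 r ≤ gt1 (r - ε) ∧ gk1 (r - ε) ≤ gk2 r) :
    (∀ r : ℝ, ε < r →
      (∀ A ∈ sliceHC H gs1 gt1 gk1 M1 r, ∃ B ∈ sliceHC H gs2 gt2 gk2 M2 (r - ε), A ⊆ B) ∧
      (∀ B ∈ sliceHC H gs2 gt2 gk2 M2 r, ∃ A ∈ sliceHC H gs1 gt1 gk1 M1 (r - ε), B ⊆ A)) ∧
    dMI μ μ (sliceHC H gs1 gt1 gk1 M1) (sliceHC H gs2 gt2 gk2 M2) ≤ ENNReal.ofReal ε := by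
  have habs := abs_le.mp hmax
  have key1 : ∀ r : ℝ, ε < r → ∀ A ∈ sliceHC H gs1 gt1 gk1 M1 r,
      ∃ B ∈ sliceHC H gs2 gt2 gk2 M2 (r - ε), A ⊆ B := by
    intro r hr A hA
    obtain ⟨hr0, hrM, hAH⟩ := hA
    have hr1 : 0 < r - ε := by linarith
    have hM : r - ε < M2 := by linarith [habs.1]
    have hc := hcurve1 r hr hrM
    have hp1 := hpos1 r ⟨hr0, hrM⟩
    have hp2 := hpos2 (r - ε) ⟨hr1, hM⟩
    obtain ⟨B, hB, hAB⟩ := hH.2 (gs1 r) (gs2 (r - ε)) (gt1 r) (gt2 (r - ε))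
      (gk1 r) (gk2 (r - ε)) hp1.1 hc.1 hp1.2.1 hc.2.1 hp2.2.2 hc.2.2 A hAH
    exact ⟨B, ⟨hr1, hM, hB⟩, hAB⟩
  have key2 : ∀ r : ℝ, ε < r → ∀ B ∈ sliceHC H gs2 gt2 gk2 M2 r,
      ∃ A ∈ sliceHC H gs1 gt1 gk1 M1 (r - ε), B ⊆ A := by
    intro r hr B hB
    obtain ⟨hr0, hrM, hBH⟩ := hB
    have hr1 : 0 < r - ε := by linarith
    have hM : r - ε < M1 := by linarith [habs.2]
    have hc := hcurve2 r hr hrM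
    have hp2 := hpos2 r ⟨hr0, hrM⟩
    have hp1 := hpos1 (r - ε) ⟨hr1, hM⟩
    obtain ⟨A, hA, hBA⟩ := hH.2 (gs2 r) (gs1 (r - ε)) (gt2 r) (gt1 (r - ε))
      (gk2 r) (gk1 (r - ε)) hp2.1 hc.1 hp2.2.1 hc.2.1 hp1.2.2 hc.2.2 B hBH
    exact ⟨A, ⟨hr1, hM, hA⟩, hBA⟩
  refine ⟨fun r hr => ⟨key1 r hr, key2 r hr⟩, ?_⟩
  apply sInf_le
  refine ⟨ε, ⟨hε, {p | p.1 = p.2}, ⟨fun x => ⟨x, rfl⟩, fun y => ⟨y, rfl⟩⟩, ?_⟩, rfl⟩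
  intro r hr
  constructor
  · classical
    refine ⟨fun A => if h : A ∈ sliceHC H gs1 gt1 gk1 M1 r
        then (key1 r hr A h).choose else ∅, ?_, ?_⟩
    · intro A hA
      simp only [dif_pos hA]
      obtain ⟨hB, hsub⟩ := (key1 r hr A hA).choose_spec
      exact ⟨hB, fun p hp hpA => by
        have : p.1 = p.2 := hp
        rw [← this]; exact hsub hpA⟩
    · intro 𝒜 h𝒜
      refine le_trans (measure_mono ?_) le_self_add
      refine Set.iUnion₂_mono fun A hA => ?_
      have hAH : A ∈ sliceHC H gs1 gt1 gk1 M1 r := h𝒜 hA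
      simp only [dif_pos hAH]
      exact (key1 r hr A hAH).choose_spec.2
  · classical
    refine ⟨fun B => if h : B ∈ sliceHC H gs2 gt2 gk2 M2 r
        then (key2 r hr B h).choose else ∅, ?_, ?_⟩
    · intro B hB
      simp only [dif_pos hB]
      obtain ⟨hA, hsub⟩ := (key2 r hr B hB).choose_spec
      exact ⟨hA, fun p hp hpB => by
        have : p.1 = p.2 := hp
        rw [this]; exact hsub hpB⟩
    · intro ℬ hℬ
      refine le_trans (measure_mono ?_) le_self_add
      refine Set.iUnion₂_mono fun B hB => ?_
      have hBH : B ∈ sliceHC H gs2 gt2 gk2 M2 r := hℬ hB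
      simp only [dif_pos hBH]
      exact (key2 r hr B hBH).choose_spec.2
end

section
/- Let H and E be hierarchical clusterings of sets X and Y, and τ ≥ 0. Then (1) the persistence-based pruning H_{pers ≥ τ} and H are τ-interleaved; and (2) if H and E are ε-interleaved with respect to a correspondence R ⊆ X × Y, then H_{pers ≥ τ} and E_{pers ≥ τ} are ε-interleaved with respect to R. -/
/-- `persSup H C = sup {i > 0 : ∃ A ∈ H(i), A ⊆ C}` (in `ℝ≥0∞`);
`pers(C) ≥ τ` for `C ∈ H(r)` means `ofReal (r + τ) ≤ persSup H C`. -/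
noncomputable def persSup {X : Type*} (H : ℝ → Set (Set X)) (C : Set X) : ENNReal :=
  sSup {e : ENNReal | ∃ i : ℝ, e = ENNReal.ofReal i ∧ 0 < i ∧ ∃ A ∈ H i, A ⊆ C}

/-- The persistence-based pruning `H_{pers ≥ τ}`. -/
def prunePers {X : Type*} (H : ℝ → Set (Set X)) (τ : ℝ) : ℝ → Set (Set X) :=
  fun r => {C | C ∈ H r ∧ ENNReal.ofReal (r + τ) ≤ persSup H C}

lemma mem_persSup {X : Type*} (H : ℝ → Set (Set X)) {C A : Set X} {i : ℝ}
    (hi : 0 < i) (hA : A ∈ H i) (hAC : A ⊆ C) : ENNReal.ofReal i ≤ persSup H C :=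
  le_sSup ⟨i, rfl, hi, A, hA, hAC⟩

lemma down {X : Type*} {H : ℝ → Set (Set X)} (hH : IsHC H) {A : Set X} {r t : ℝ}
    (hr : 0 < r) (hA : A ∈ H r) (hrt : r ≤ t)
    (ht : ENNReal.ofReal t < persSup H A) : ∃ A' ∈ H t, A' ⊆ A := by
  obtain ⟨e, he, hlt⟩ := lt_sSup_iff.mp ht
  obtain ⟨i, rfl, hi, A', hA', hsub⟩ := he
  have hti : t < i := by
    by_contra h; push_neg at h
    exact absurd (ENNReal.ofReal_le_ofReal h) hlt.not_ge
  have ht0 : 0 < t := lt_of_lt_of_le hr hrt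
  obtain ⟨A'', hA'', hsub2⟩ := hH.2 i t ht0 hti.le A' hA'
  obtain ⟨A₀, hA₀, hsub3⟩ := hH.2 t r hr hrt A'' hA''
  obtain ⟨x, hx⟩ := (hH.1 i hi).1 A' hA'
  have hAA : A₀ = A := by
    by_contra hne
    exact (Set.disjoint_left.mp ((hH.1 r hr).2 A₀ hA₀ A hA hne)
      (hsub3 (hsub2 hx))) (hsub hx)
  exact ⟨A'', hA'', hAA ▸ hsub3⟩

lemma ofReal_le_of_forall (a : ℝ) (s : ENNReal)
    (h : ∀ δ : ℝ, 0 < δ → ENNReal.ofReal (a - δ) ≤ s) : ENNReal.ofReal a ≤ s := by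
  refine le_of_forall_lt fun c hc => ?_
  have hc' : c ≠ ⊤ := hc.trans_le le_top |>.ne
  have hca : c.toReal < a := by
    have := ENNReal.lt_ofReal_iff_toReal_lt hc' |>.mp hc
    exact this
  have hδ : 0 < (a - c.toReal) / 2 := by linarith
  have h1 : c.toReal < a - (a - c.toReal) / 2 := by linarith
  have h2 : c < ENNReal.ofReal (a - (a - c.toReal) / 2) := by
    calc c = ENNReal.ofReal c.toReal := (ENNReal.ofReal_toReal hc').symm
    _ < _ := (ENNReal.ofReal_lt_ofReal_iff (by have := ENNReal.toReal_nonneg (a := c); linarith)).mpr h1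
  exact lt_of_lt_of_le h2 (h _ hδ)

lemma key {X Y : Type*} {H : ℝ → Set (Set X)} {E : ℝ → Set (Set Y)}
    (hH : IsHC H) (hE : IsHC E) (τ ε : ℝ) (hτ : 0 ≤ τ) (hε : 0 ≤ ε)
    (R : Set (X × Y)) (hR : ∀ x, ∃ y, (x, y) ∈ R)
    (hI : ∀ r, ε < r → ∀ A ∈ H r, ∃ B ∈ E (r - ε), ∀ p ∈ R, p.1 ∈ A → p.2 ∈ B)
    (r : ℝ) (hr : ε < r) :
    ∀ A ∈ prunePers H τ r, ∃ B ∈ prunePers E τ (r - ε), ∀ p ∈ R, p.1 ∈ A → p.2 ∈ B := by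
  rintro A ⟨hA, hpers⟩
  obtain ⟨B, hB, hmap⟩ := hI r hr A hA
  have hr0 : 0 < r := lt_of_le_of_lt hε hr
  have hrε : 0 < r - ε := by linarith
  have sub : ∀ t, r ≤ t → (∃ A' ∈ H t, A' ⊆ A) →
      ENNReal.ofReal (t - ε) ≤ persSup E B := by
    rintro t hrt ⟨A', hA', hsub⟩
    obtain ⟨B', hB', hmap'⟩ := hI t (lt_of_lt_of_le hr hrt) A' hA'
    obtain ⟨B'', hB'', hsub2⟩ := hE.2 (t - ε) (r - ε) hrε (by linarith) B' hB'
    obtain ⟨x, hx⟩ := (hH.1 t (by linarith)).1 A' hA'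
    obtain ⟨y, hy⟩ := hR x
    have hyB' : y ∈ B' := hmap' (x, y) hy hx
    have hyB : y ∈ B := hmap (x, y) hy (hsub hx)
    have hBB : B'' = B := by
      by_contra hne
      exact (Set.disjoint_left.mp ((hE.1 (r - ε) hrε).2 B'' hB'' B hB hne)
        (hsub2 hyB')) hyB
    exact mem_persSup E (by linarith) hB' (hBB ▸ hsub2)
  refine ⟨B, ⟨hB, ?_⟩, hmap⟩
  apply ofReal_le_of_forall
  intro δ hδ
  by_cases hcase : δ < τ
  · have hlt : ENNReal.ofReal (r + τ - δ) < persSup H A :=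
      lt_of_lt_of_le ((ENNReal.ofReal_lt_ofReal_iff (by linarith)).mpr (by linarith)) hpers
    have hA' := down hH hr0 hA (t := r + τ - δ) (by linarith) hlt
    have h2 := sub (r + τ - δ) (by linarith) hA'
    have : r - ε + τ - δ = r + τ - δ - ε := by ring
    rw [this]; exact h2
  · calc ENNReal.ofReal (r - ε + τ - δ) ≤ ENNReal.ofReal (r - ε) :=
        ENNReal.ofReal_le_ofReal (by linarith)
    _ ≤ persSup E B := mem_persSup E hrε hB subset_rfl

/-- (1) `H_{pers ≥ τ}` and `H` are `τ`-interleaved; (2) pruning preserves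
`ε`-interleavings with respect to a correspondence. -/
theorem stmt9 {X Y : Type*} (H : ℝ → Set (Set X)) (E : ℝ → Set (Set Y))
    (hH : IsHC H) (hE : IsHC E) (τ : ℝ) (hτ : 0 ≤ τ) :
    (∀ r : ℝ, τ < r →
      (∀ C ∈ prunePers H τ r, ∃ B ∈ H (r - τ), C ⊆ B) ∧
      (∀ C ∈ H r, ∃ B ∈ prunePers H τ (r - τ), C ⊆ B)) ∧
    (∀ (R : Set (X × Y)) (ε : ℝ), 0 ≤ ε → IsCorr R → InterR H E R ε →
      InterR (prunePers H τ) (prunePers E τ) R ε) := by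
  constructor
  · intro r hrτ
    constructor
    · rintro C ⟨hC, -⟩
      exact hH.2 r (r - τ) (by linarith) (by linarith) C hC
    · intro C hC
      obtain ⟨B, hB, hsub⟩ := hH.2 r (r - τ) (by linarith) (by linarith) C hC
      refine ⟨B, ⟨hB, ?_⟩, hsub⟩
      have : r - τ + τ = r := by ring
      rw [this]
      exact mem_persSup H (by linarith) hC hsub
  · intro R ε hε hCorr hInter r hr
    constructor
    · exact key hH hE τ ε hτ hε R hCorr.1 (fun s hs => (hInter s hs).1) r hr
    · have hkey := key hE hH τ ε hτ hε {p : Y × X | (p.2, p.1) ∈ R}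
        (fun y => (hCorr.2 y).imp fun x hx => hx)
        (fun s hs => by
          intro B hB
          obtain ⟨A, hA, hmap⟩ := (hInter s hs).2 B hB
          exact ⟨A, hA, fun q hq hq1 => hmap (q.2, q.1) hq hq1⟩) r hr
      intro B hB
      obtain ⟨A, hA, hmap⟩ := hkey B hB
      exact ⟨A, hA, fun p hp hp2 => hmap (p.2, p.1) hp hp2⟩
end

section
/- Let H and E be measurable hierarchical clusterings of measure spaces X and Y. Assume both H and E are (κ,ρ)-non-compressing around the minimum cluster size m, and that H and E are (ε;ε)-measured-interleaved with respect to a correspondence R ⊆ X × Y for some ε < κ. Then H_{μ≥m} and E_{μ≥m} are (ε+ρ; ε)-measured-interleaved with respect to R. -/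
open MeasureTheory

/-- All clusters are measurable. -/
def MeasurableHC {X : Type*} [MeasurableSpace X] (H : ℝ → Set (Set X)) : Prop :=
  ∀ r : ℝ, 0 < r → ∀ A ∈ H r, MeasurableSet A

/-- `H` is `(κ,ρ)`-non-compressing around the minimum cluster size `m`. -/
def NonCompressing {X : Type*} [MeasurableSpace X] (μ : Measure X)
    (H : ℝ → Set (Set X)) (κ ρ m : ℝ) : Prop :=
  ∀ r r' : ℝ, 0 < r' → r' < r → ∀ C ∈ H r, ∀ C' ∈ H r', C ⊆ C' →
    |(μ C).toReal - m| < κ → |(μ C').toReal - m| < κ → r - r' < ρ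

/-- The measure-based pruning `H_{μ ≥ m}`. -/
def pruneMeas {X : Type*} [MeasurableSpace X] (μ : Measure X)
    (H : ℝ → Set (Set X)) (m : ℝ) : ℝ → Set (Set X) :=
  fun r => {C | C ∈ H r ∧ ENNReal.ofReal m ≤ μ C}

/-- One direction of the pruning stability argument. -/
lemma prune_aux {X Y : Type*} [MeasurableSpace X] [MeasurableSpace Y]
    (μX : Measure X) (μY : Measure Y) [IsFiniteMeasure μX] [IsFiniteMeasure μY]
    (H : ℝ → Set (Set X)) (E : ℝ → Set (Set Y)) (hE : IsHC E)
    (κ ρ m : ℝ) (hρ : 0 < ρ) (hEnc : NonCompressing μY E κ ρ m)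
    (ε : ℝ) (hε0 : 0 ≤ ε) (hεκ : ε < κ)
    (rel : X → Y → Prop) (r : ℝ) (hr : ε + ρ < r)
    (f : Set X → Set Y)
    (hf : ∀ A ∈ H r, f A ∈ E (r - ε) ∧ ∀ x y, rel x y → x ∈ A → y ∈ f A)
    (hfμ : ∀ 𝒜 : Finset (Set X), ↑𝒜 ⊆ H r →
      μX (⋃ A ∈ 𝒜, (A : Set X)) ≤ μY (⋃ A ∈ 𝒜, f A) + ENNReal.ofReal ε) :
    ∃ F : Set X → Set Y,
      (∀ A ∈ pruneMeas μX H m r, F A ∈ pruneMeas μY E m (r - (ε + ρ)) ∧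
        ∀ x y, rel x y → x ∈ A → y ∈ F A) ∧
      ∀ 𝒜 : Finset (Set X), ↑𝒜 ⊆ pruneMeas μX H m r →
        μX (⋃ A ∈ 𝒜, (A : Set X)) ≤ μY (⋃ A ∈ 𝒜, F A) + ENNReal.ofReal ε := by
  classical
  set F : Set X → Set Y := fun A =>
    if h : ∃ B ∈ E (r - (ε + ρ)), f A ⊆ B then h.choose else ∅ with hF
  have hkey : ∀ A ∈ pruneMeas μX H m r, F A ∈ E (r - (ε + ρ)) ∧ f A ⊆ F A := by
    intro A hA
    have hAH : A ∈ H r := hA.1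
    have hfE : f A ∈ E (r - ε) := (hf A hAH).1
    have hex : ∃ B ∈ E (r - (ε + ρ)), f A ⊆ B := by
      have := hE.2 (r - ε) (r - (ε + ρ)) (by linarith) (by linarith) (f A) hfE
      exact this
    simp only [hF, dif_pos hex]
    exact ⟨hex.choose_spec.1, hex.choose_spec.2⟩
  refine ⟨F, fun A hA => ?_, fun 𝒜 h𝒜 => ?_⟩
  · have hAH : A ∈ H r := hA.1
    have hAm : ENNReal.ofReal m ≤ μX A := hA.2
    have hfE : f A ∈ E (r - ε) := (hf A hAH).1
    obtain ⟨hFE, hsub⟩ := hkey A hA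
    have hμfA : μX A ≤ μY (f A) + ENNReal.ofReal ε := by
      have h1 := hfμ {A} (by simpa using hAH)
      simpa using h1
    have hFm : ENNReal.ofReal m ≤ μY (F A) := by
      rcases le_or_gt m 0 with hm0 | hm0
      · simp [ENNReal.ofReal_of_nonpos hm0]
      by_contra hlt
      push_neg at hlt
      have hfinf : μY (f A) ≠ ⊤ := measure_ne_top _ _
      have hfinF : μY (F A) ≠ ⊤ := measure_ne_top _ _
      have hfinX : μX A ≠ ⊤ := measure_ne_top _ _
      set a := (μY (f A)).toReal with ha
      set b := (μY (F A)).toReal with hb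
      have hab : a ≤ b := ENNReal.toReal_le_toReal hfinf hfinF |>.mpr (measure_mono hsub)
      have hbm : b < m := by
        rcases lt_or_ge b m with h | h
        · exact h
        · exfalso
          have : ENNReal.ofReal m ≤ μY (F A) := by
            rw [← ENNReal.ofReal_toReal hfinF]
            exact ENNReal.ofReal_le_ofReal h
          exact absurd this (not_le.mpr hlt)
      have hma : m ≤ (μX A).toReal := by
        have h := ENNReal.toReal_le_toReal ENNReal.ofReal_ne_top hfinX |>.mpr hAm
        rwa [ENNReal.toReal_ofReal hm0.le] at h
      have hXa : (μX A).toReal ≤ a + ε := by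
        have := ENNReal.toReal_le_toReal hfinX (by
          exact ENNReal.add_ne_top.mpr ⟨hfinf, ENNReal.ofReal_ne_top⟩) |>.mpr hμfA
        rwa [ENNReal.toReal_add hfinf ENNReal.ofReal_ne_top,
          ENNReal.toReal_ofReal hε0] at this
      have h1 : |a - m| < κ := by
        rw [abs_lt]; constructor <;> linarith
      have h2 : |b - m| < κ := by
        rw [abs_lt]; constructor <;> linarith
      have := hEnc (r - ε) (r - (ε + ρ)) (by linarith) (by linarith)
        (f A) hfE (F A) hFE hsub h1 h2
      linarith
    exact ⟨⟨hFE, hFm⟩, fun x y hxy hx => hsub ((hf A hAH).2 x y hxy hx)⟩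
  · have h𝒜H : ↑𝒜 ⊆ H r := fun A hA => (h𝒜 hA).1
    refine le_trans (hfμ 𝒜 h𝒜H) (add_le_add_left (measure_mono ?_) _)
    exact Set.iUnion₂_mono fun A hA => (hkey A (h𝒜 hA)).2

/-- Stability of measure-based pruning: if `H` and `E` are both `(κ,ρ)`-non-compressing
around `m` and `(ε;ε)`-measured-interleaved w.r.t. `R` with `ε < κ`, then the prunings
`H_{μ≥m}` and `E_{μ≥m}` are `(ε+ρ; ε)`-measured-interleaved w.r.t. `R`. -/
theorem stmt14 {X Y : Type*} [MeasurableSpace X] [MeasurableSpace Y]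
    (μX : Measure X) (μY : Measure Y) [IsFiniteMeasure μX] [IsFiniteMeasure μY]
    (H : ℝ → Set (Set X)) (E : ℝ → Set (Set Y))
    (hH : IsHC H) (hE : IsHC E) (hHm : MeasurableHC H) (hEm : MeasurableHC E)
    (κ ρ m : ℝ) (hκ : 0 < κ) (hρ : 0 < ρ)
    (hHnc : NonCompressing μX H κ ρ m) (hEnc : NonCompressing μY E κ ρ m)
    (ε : ℝ) (hε0 : 0 ≤ ε) (hεκ : ε < κ)
    (R : Set (X × Y)) (hR : IsCorr R) (hint : MInter μX μY H E R ε ε) :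
    MInter μX μY (pruneMeas μX H m) (pruneMeas μY E m) R (ε + ρ) ε := by
  intro r hr
  obtain ⟨⟨f, hf, hfμ⟩, ⟨g, hg, hgμ⟩⟩ := hint r (by linarith)
  constructor
  · obtain ⟨F, hF1, hF2⟩ := prune_aux μX μY H E hE κ ρ m hρ hEnc ε hε0 hεκ
      (fun x y => (x, y) ∈ R) r hr f
      (fun A hA => ⟨(hf A hA).1, fun x y hxy hx => (hf A hA).2 (x, y) hxy hx⟩) hfμ
    exact ⟨F, fun A hA => ⟨(hF1 A hA).1, fun p hp hx => (hF1 A hA).2 p.1 p.2 hp hx⟩, hF2⟩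
  · obtain ⟨G, hG1, hG2⟩ := prune_aux μY μX E H hH κ ρ m hρ hHnc ε hε0 hεκ
      (fun y x => (x, y) ∈ R) r hr g
      (fun B hB => ⟨(hg B hB).1, fun y x hxy hy => (hg B hB).2 (x, y) hxy hy⟩) hgμ
    exact ⟨G, fun B hB => ⟨(hG1 B hB).1, fun p hp hy => (hG1 B hB).2 p.2 p.1 hp hy⟩, hG2⟩
end

section
/- Let H and E be measurable hierarchical clusterings of measure spaces X and Y. Assume H is (κ,ρ)-non-compressing around m, and H and E are (ε;ε)-measured-interleaved with respect to a correspondence R for some ε < κ. Then E is (κ−ε, ρ+2ε)-non-compressing around m. -/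
open MeasureTheory

/-- If `H` is `(κ,ρ)`-non-compressing around `m` and `H`, `E` are
`(ε;ε)`-measured-interleaved w.r.t. `R` with `ε < κ`, then `E` is
`(κ−ε, ρ+2ε)`-non-compressing around `m`. -/
theorem stmt15 {X Y : Type*} [MeasurableSpace X] [MeasurableSpace Y]
    (μX : Measure X) (μY : Measure Y) [IsFiniteMeasure μX] [IsFiniteMeasure μY]
    (H : ℝ → Set (Set X)) (E : ℝ → Set (Set Y))
    (hH : IsHC H) (hE : IsHC E) (hHm : MeasurableHC H) (hEm : MeasurableHC E)
    (κ ρ m : ℝ) (hκ : 0 < κ) (hρ : 0 < ρ)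
    (hHnc : NonCompressing μX H κ ρ m)
    (ε : ℝ) (hε0 : 0 ≤ ε) (hεκ : ε < κ)
    (R : Set (X × Y)) (hR : IsCorr R) (hint : MInter μX μY H E R ε ε) :
    NonCompressing μY E (κ - ε) (ρ + 2 * ε) m := by
  intro r r' hr' hrr' C hC C' hC' hsub hmC hmC'
  by_cases hcase : r - r' ≤ 2 * ε
  · linarith
  push_neg at hcase
  have hr0 : 0 < r := by linarith
  have hεr : ε < r := by linarith
  obtain ⟨-, g, hg1, hg2⟩ := hint r hεr
  obtain ⟨⟨f, hf1, hf2⟩, -⟩ := hint (r' + ε) (by linarith)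
  have hgC : g C ∈ H (r - ε) := (hg1 C hC).1
  obtain ⟨A', hA', hsubA'⟩ :=
    hH.2 (r - ε) (r' + ε) (by linarith) (by linarith) (g C) hgC
  -- pick a point of C, and a partner in X
  obtain ⟨y, hy⟩ := (hE.1 r hr0).1 C hC
  obtain ⟨x, hxy⟩ := hR.2 y
  have hxgC : x ∈ g C := (hg1 C hC).2 (x, y) hxy hy
  have hfA'mem : f A' ∈ E r' := by
    have := (hf1 A' hA').1
    have hre : r' + ε - ε = r' := by ring
    rwa [hre] at this
  have hyfA' : y ∈ f A' := (hf1 A' hA').2 (x, y) hxy (hsubA' hxgC)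
  have hfA'eq : f A' = C' := by
    by_contra hne
    exact Set.disjoint_left.1 ((hE.1 r' hr').2 (f A') hfA'mem C' hC' hne)
      hyfA' (hsub hy)
  -- measure inequalities
  have hg2' : μY C ≤ μX (g C) + ENNReal.ofReal ε := by
    have := hg2 {C} (by simp [hC])
    simpa using this
  have hf2' : μX A' ≤ μY C' + ENNReal.ofReal ε := by
    have := hf2 {A'} (by simp [hA'])
    simpa [hfA'eq] using this
  have hfinX : ∀ s : Set X, μX s ≠ ⊤ := fun s => measure_ne_top μX s
  have hfinY : ∀ s : Set Y, μY s ≠ ⊤ := fun s => measure_ne_top μY s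
  have h1 : (μY C).toReal ≤ (μX (g C)).toReal + ε := by
    have := ENNReal.toReal_mono (by simp [hfinX, ENNReal.add_ne_top]) hg2'
    rwa [ENNReal.toReal_add (hfinX _) ENNReal.ofReal_ne_top,
      ENNReal.toReal_ofReal hε0] at this
  have h2 : (μX A').toReal ≤ (μY C').toReal + ε := by
    have := ENNReal.toReal_mono (by simp [hfinY, ENNReal.add_ne_top]) hf2'
    rwa [ENNReal.toReal_add (hfinY _) ENNReal.ofReal_ne_top,
      ENNReal.toReal_ofReal hε0] at this
  have h3 : (μX (g C)).toReal ≤ (μX A').toReal :=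
    ENNReal.toReal_mono (hfinX _) (measure_mono hsubA')
  rw [abs_lt] at hmC hmC'
  have habs1 : |(μX (g C)).toReal - m| < κ := by
    rw [abs_lt]; constructor <;> linarith [hmC.1, hmC.2, hmC'.1, hmC'.2]
  have habs2 : |(μX A').toReal - m| < κ := by
    rw [abs_lt]; constructor <;> linarith [hmC.1, hmC.2, hmC'.1, hmC'.2]
  have := hHnc (r - ε) (r' + ε) (by linarith) (by linarith) (g C) hgC A' hA'
    hsubA' habs1 habs2
  linarith
end

section
/- Let f : ℝ^d → ℝ be a continuous, compactly supported probability density function, let r > 0, and let A ≠ A' be distinct connected components of {x : f(x) ≥ r}. Then there exists ε > 0 with ε < r and distinct connected components B, B' of {x : f(x) ≥ r−ε} such that A ⊆ B and A' ⊆ B'. -/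
open MeasureTheory Set

/-- A superlevel set at a positive level of a continuous compactly supported function
is compact. -/
lemma stmt18_compact_level {d : ℕ} {f : EuclideanSpace ℝ (Fin d) → ℝ}
    (hfc : Continuous f) (hfs : HasCompactSupport f) {c : ℝ} (hc : 0 < c) :
    IsCompact {x | c ≤ f x} := by
  apply IsCompact.of_isClosed_subset hfs (isClosed_le continuous_const hfc)
  intro x hx
  have hpos : 0 < f x := lt_of_lt_of_le hc hx
  exact subset_tsupport f (by simpa [Function.mem_support] using hpos.ne')

/-- For a continuous compactly supported density `f`, distinct connected components
`A ≠ A'` of `{f ≥ r}` remain in distinct connected components of `{f ≥ r − ε}` for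
some `ε ∈ (0, r)`, and they are contained in those components. -/
theorem stmt18 (d : ℕ) (f : EuclideanSpace ℝ (Fin d) → ℝ)
    (hfc : Continuous f) (hfs : HasCompactSupport f)
    (hf0 : ∀ x, 0 ≤ f x) (hf1 : ∫ x, f x = 1)
    (r : ℝ) (hr : 0 < r) (a a' : EuclideanSpace ℝ (Fin d))
    (ha : r ≤ f a) (ha' : r ≤ f a')
    (hne : connectedComponentIn {x | r ≤ f x} a ≠ connectedComponentIn {x | r ≤ f x} a') :
    ∃ ε : ℝ, 0 < ε ∧ ε < r ∧
      connectedComponentIn {x | r - ε ≤ f x} a ≠ connectedComponentIn {x | r - ε ≤ f x} a' ∧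
      connectedComponentIn {x | r ≤ f x} a ⊆ connectedComponentIn {x | r - ε ≤ f x} a ∧
      connectedComponentIn {x | r ≤ f x} a' ⊆ connectedComponentIn {x | r - ε ≤ f x} a' := by
  set K : Set (EuclideanSpace ℝ (Fin d)) := {x | r ≤ f x} with hKdef
  have hK : IsCompact K := stmt18_compact_level hfc hfs hr
  haveI : CompactSpace K := isCompact_iff_compactSpace.mp hK
  set pa : K := ⟨a, ha⟩
  set pa' : K := ⟨a', ha'⟩
  -- a' is not in the connected component of a inside K (as a subtype)
  have hnotmem : pa' ∉ connectedComponent pa := by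
    intro hmem
    apply hne
    have hmem' : a' ∈ connectedComponentIn K a := by
      rw [connectedComponentIn_eq_image (F := K) (x := a) ha]
      exact ⟨pa', hmem, rfl⟩
    exact connectedComponentIn_eq hmem'
  -- find a clopen separating them
  rw [connectedComponent_eq_iInter_isClopen, mem_iInter] at hnotmem
  push_neg at hnotmem
  obtain ⟨⟨Z, hZclopen, hZa⟩, hZa'⟩ := hnotmem
  -- project to ambient space
  have hZ1 : IsCompact ((↑) '' Z : Set (EuclideanSpace ℝ (Fin d))) :=
    (hZclopen.1.isCompact).image continuous_subtype_val
  have hZ2 : IsCompact ((↑) '' Zᶜ : Set (EuclideanSpace ℝ (Fin d))) :=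
    (hZclopen.2.isClosed_compl.isCompact).image continuous_subtype_val
  have hdisj : Disjoint ((↑) '' Z : Set (EuclideanSpace ℝ (Fin d))) ((↑) '' Zᶜ) := by
    rw [disjoint_iff_inter_eq_empty, ← Set.image_inter Subtype.val_injective]
    simp
  obtain ⟨U, V, hUopen, hVopen, hZU, hZV, hUV⟩ :=
    SeparatedNhds.of_isCompact_isCompact hZ1 hZ2 hdisj
  have haU : a ∈ U := hZU ⟨pa, hZa, rfl⟩
  have haV : a' ∈ V := hZV ⟨pa', hZa', rfl⟩
  have hKsub : K ⊆ U ∪ V := by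
    rintro x hx
    by_cases hxZ : (⟨x, hx⟩ : K) ∈ Z
    · exact Or.inl (hZU ⟨_, hxZ, rfl⟩)
    · exact Or.inr (hZV ⟨_, hxZ, rfl⟩)
  -- find n such that the enlarged level set is inside U ∪ V
  have hstep : ∀ n : ℕ, (0:ℝ) < r / (n + 2) ∧ r / (n+2) < r := by
    intro n
    constructor
    · positivity
    · rw [div_lt_iff₀ (by positivity)]
      nlinarith
  have key : ∃ n : ℕ, {x | r - r / (n + 2) ≤ f x} ⊆ U ∪ V := by
    by_contra hcon
    push_neg at hcon
    set D : ℕ → Set (EuclideanSpace ℝ (Fin d)) :=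
      fun n => {x | r - r / (n + 2) ≤ f x} \ (U ∪ V) with hD
    have hDne : ∀ n, (D n).Nonempty := fun n => by
      obtain ⟨x, hx1, hx2⟩ := Set.not_subset.mp (hcon n)
      exact ⟨x, hx1, hx2⟩
    have hDcompact : ∀ n, IsCompact (D n) := fun n =>
      ((stmt18_compact_level hfc hfs (by linarith [(hstep n).2] : (0:ℝ) < r - r / (n+2)))).diff
        (hUopen.union hVopen)
    have hDclosed : ∀ n, IsClosed (D n) := fun n =>
      ((isClosed_le continuous_const hfc)).sdiff (hUopen.union hVopen)
    have hDdir : Directed (· ⊇ ·) D := by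
      apply directed_of_isDirected_le
      intro m n hmn
      apply Set.diff_subset_diff_left
      intro x hx
      have h1 : r / ((n:ℝ) + 2) ≤ r / ((m:ℝ) + 2) := by
        apply div_le_div_of_nonneg_left hr.le (by positivity)
        have : (m:ℝ) ≤ n := Nat.cast_le.mpr hmn
        linarith
      simp only [mem_setOf_eq] at hx ⊢
      linarith
    obtain ⟨x, hx⟩ := IsCompact.nonempty_iInter_of_directed_nonempty_isCompact_isClosed
      D hDdir hDne hDcompact hDclosed
    simp only [mem_iInter] at hx
    have hxK : x ∈ K := by
      simp only [hKdef, mem_setOf_eq]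
      by_contra hlt
      push_neg at hlt
      obtain ⟨n, hn⟩ := exists_nat_gt (r / (r - f x))
      have hrf : 0 < r - f x := by linarith
      have h1 : r / ((n:ℝ) + 2) < r - f x := by
        rw [div_lt_iff₀ (by positivity)]
        rw [div_lt_iff₀ hrf] at hn
        nlinarith
      have := (hx n).1
      simp only [mem_setOf_eq] at this
      linarith
    exact (hx 0).2 (hKsub hxK)
  obtain ⟨n, hn⟩ := key
  set ε := r / (n + 2) with hε
  have hε0 : 0 < ε := (hstep n).1
  have hεr : ε < r := (hstep n).2
  have hKKε : K ⊆ {x | r - ε ≤ f x} := fun x hx => by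
    have hx' : r ≤ f x := hx
    simp only [mem_setOf_eq]; linarith
  have haKε : a ∈ {x | r - ε ≤ f x} := hKKε ha
  have haKε' : a' ∈ {x | r - ε ≤ f x} := hKKε ha'
  refine ⟨ε, hε0, hεr, ?_, connectedComponentIn_mono a hKKε,
    connectedComponentIn_mono a' hKKε⟩
  -- the component of a in the enlarged set is contained in U
  intro heq
  have hCconn := isPreconnected_connectedComponentIn
    (F := {x | r - ε ≤ f x}) (x := a)
  have hCsub : connectedComponentIn {x | r - ε ≤ f x} a ⊆ U ∪ V :=
    (connectedComponentIn_subset _ _).trans hn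
  have hCU : connectedComponentIn {x | r - ε ≤ f x} a ⊆ U :=
    hCconn.subset_left_of_subset_union hUopen hVopen hUV hCsub
      ⟨a, mem_connectedComponentIn haKε, haU⟩
  have haC : a' ∈ connectedComponentIn {x | r - ε ≤ f x} a := by
    rw [heq]; exact mem_connectedComponentIn haKε'
  exact hUV.ne_of_mem (hCU haC) haV rfl
end
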